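/- arXiv:2012.14953 — 3 statements merged into one kernel-verified Lean document; each statement's English description precedes it below -/
import Mathlib

section
/- For every $\beta > 0$ and every $\delta \in (0,1)$, the sum $\sum_{k \in \mathbb{Z}^2 \setminus \{0\}} \frac{1}{|k|^2 (1 + \delta |k|^{2\beta})}$ is bounded above by $C\left(\frac{1}{\beta} \log \frac{1}{\delta} + \frac{1}{\beta} + 1\right)$ for some constant $C$ independent of $\delta$ and $\beta$. -/
open Real Finset

lemma log_lb {a : ℝ} (ha : 0 < a) : 1/(a+1) ≤ Real.log (a+1) - Real.log a := by
  have ha1 : (0:ℝ) < a + 1 := by linarith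
  have h := Real.log_le_sub_one_of_pos (div_pos ha ha1)
  rw [Real.log_div (ne_of_gt ha) (ne_of_gt ha1)] at h
  have h2 : a/(a+1) - 1 = -(1/(a+1)) := by field_simp; ring
  rw [h2] at h
  linarith

lemma harmonic_bound : ∀ N : ℕ, ∑ m ∈ Finset.Icc 1 N, (1:ℝ)/m ≤ 1 + Real.log N := by
  intro N
  induction N with
  | zero => simp
  | succ n ih =>
    rcases Nat.eq_zero_or_pos n with hn | hn
    · subst hn; simp
    · rw [Finset.sum_Icc_succ_top (by omega)]
      have hlb := log_lb (a := (n:ℝ)) (by exact_mod_cast hn)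
      push_cast
      linarith

lemma tailstep {s : ℝ} (hs : 0 < s) {a : ℝ} (ha : 1 ≤ a) :
    (a+1) ^ (-1-s) ≤ (a^(-s) - (a+1)^(-s))/s := by
  have ha0 : (0:ℝ) < a := by linarith
  have hb : (0:ℝ) < a + 1 := by linarith
  have hP : (0:ℝ) < a ^ s := Real.rpow_pos_of_pos ha0 _
  have hQ : (0:ℝ) < (a+1) ^ s := Real.rpow_pos_of_pos hb _
  have hlb := log_lb ha0
  have h1 : 1 + s * (1/(a+1)) ≤ (a+1)^s / a^s := by
    rw [← Real.div_rpow (le_of_lt hb) (le_of_lt ha0),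
      Real.rpow_def_of_pos (div_pos hb ha0) s,
      Real.log_div (ne_of_gt hb) (ne_of_gt ha0)]
    have := Real.add_one_le_exp ((Real.log (a+1) - Real.log a) * s)
    nlinarith [mul_le_mul_of_nonneg_right hlb (le_of_lt hs)]
  have h1' : (1 + s * (1/(a+1))) * a^s ≤ (a+1)^s := (le_div_iff₀ hP).mp h1
  have hAe : a^(-s) = (a^s)⁻¹ := by rw [Real.rpow_neg (le_of_lt ha0)]
  have hBe : (a+1)^(-s) = ((a+1)^s)⁻¹ := by rw [Real.rpow_neg (le_of_lt hb)]
  have key : (a+1)^(-s) * (1 + s * (1/(a+1))) ≤ a^(-s) := by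
    rw [hAe, hBe, inv_eq_one_div, inv_eq_one_div, mul_comm, mul_one_div, div_le_div_iff₀ hQ hP]
    nlinarith
  have hsplit : (a+1) ^ (-1-s) = (a+1)^(-s) * (1/(a+1)) := by
    rw [show (-1-s : ℝ) = (-s) + (-1) by ring, Real.rpow_add hb, Real.rpow_neg_one]
    ring
  rw [hsplit, le_div_iff₀ hs]
  nlinarith [Real.rpow_pos_of_pos hb (-s)]

lemma tailsum {s : ℝ} (hs : 0 < s) {N : ℕ} (hN : 1 ≤ N) :
    ∀ j : ℕ, ∑ m ∈ Finset.Icc (N+1) (N+j), ((m:ℝ))^(-1-s)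
      ≤ ((N:ℝ)^(-s) - (((N+j : ℕ)):ℝ)^(-s))/s := by
  intro j
  induction j with
  | zero => simp
  | succ n ih =>
    rw [show N + (n+1) = (N+n) + 1 by ring, Finset.sum_Icc_succ_top (by omega)]
    have ha : (1:ℝ) ≤ ((N+n : ℕ):ℝ) := by exact_mod_cast Nat.le_add_right_of_le hN
    have hts := tailstep hs ha
    have hc : (((N+n : ℕ)):ℝ) + 1 = (((N+n+1 : ℕ)):ℝ) := by push_cast; ring
    rw [hc] at hts
    calc ∑ m ∈ Finset.Icc (N+1) (N+n), ((m:ℝ))^(-1-s) + (((N+n+1:ℕ)):ℝ)^(-1-s)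
        ≤ ((N:ℝ)^(-s) - (((N+n : ℕ)):ℝ)^(-s))/s
            + ((((N+n:ℕ)):ℝ)^(-s) - (((N+n+1:ℕ)):ℝ)^(-s))/s := add_le_add ih hts
      _ = ((N:ℝ)^(-s) - (((N+n+1 : ℕ)):ℝ)^(-s))/s := by rw [← add_div]; ring_nf

lemma tailsum' {s : ℝ} (hs : 0 < s) {N : ℕ} (hN : 1 ≤ N) (M : ℕ) :
    ∑ m ∈ Finset.Icc (N+1) M, ((m:ℝ))^(-1-s) ≤ (N:ℝ)^(-s)/s := by
  rcases le_or_gt M N with h | h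
  · rw [Finset.Icc_eq_empty (by omega)]
    simp only [Finset.sum_empty]
    positivity
  · obtain ⟨j, rfl⟩ : ∃ j, M = N + j := ⟨M - N, by omega⟩
    have h1 := tailsum hs hN j
    have hpos : (0:ℝ) < (((N+j:ℕ)):ℝ)^(-s) := by
      apply Real.rpow_pos_of_pos
      have : 0 < N + j := by omega
      exact_mod_cast this
    calc ∑ m ∈ Finset.Icc (N+1) (N+j), ((m:ℝ))^(-1-s)
        ≤ ((N:ℝ)^(-s) - (((N+j : ℕ)):ℝ)^(-s))/s := h1
      _ ≤ (N:ℝ)^(-s)/s := by gcongr; linarith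

lemma oneD {β δ : ℝ} (hβ : 0 < β) (hδ0 : 0 < δ) (hδ1 : δ < 1) (M : ℕ) :
    ∑ m ∈ Finset.Icc 1 M, 1/((m:ℝ) * (1 + δ * (m:ℝ)^(2*β)))
      ≤ 1 + Real.log 2 + (1/(2*β)) * Real.log (1/δ) + 1/(2*β) := by
  classical
  set s : ℝ := 2*β with hsdef
  have hs : 0 < s := by positivity
  set r : ℝ := δ ^ (-(1/s)) with hrdef
  have hr1 : 1 < r := by
    rw [hrdef]
    rw [Real.one_lt_rpow_iff_of_pos hδ0]
    right
    constructor
    · exact hδ1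
    · rw [neg_lt, neg_zero]; positivity
  have hr0 : 0 < r := by linarith
  set N : ℕ := ⌈r⌉₊ with hNdef
  have hN1 : 1 ≤ N := Nat.one_le_ceil_iff.mpr hr0
  have hNr : r ≤ (N:ℝ) := Nat.le_ceil r
  have hNup : (N:ℝ) ≤ 2*r := by
    have := Nat.ceil_lt_add_one (le_of_lt hr0)
    rw [← hNdef] at this
    linarith
  have hN0 : (0:ℝ) < (N:ℝ) := by exact_mod_cast hN1
  have hrs : r ^ (-s) = δ := by
    rw [hrdef, ← Real.rpow_mul (le_of_lt hδ0)]
    rw [show (-(1/s)) * (-s) = 1 by field_simp]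
    exact Real.rpow_one δ
  have hNs : (N:ℝ)^(-s) ≤ δ := by
    rw [← hrs]
    exact Real.rpow_le_rpow_of_nonpos hr0 hNr (by linarith)
  have hlogN : Real.log N ≤ Real.log 2 + (1/s) * Real.log (1/δ) := by
    have h1 : Real.log N ≤ Real.log (2*r) := Real.log_le_log hN0 hNup
    have h2 : Real.log (2*r) = Real.log 2 + Real.log r := Real.log_mul (by norm_num) (ne_of_gt hr0)
    have h3 : Real.log r = (1/s) * Real.log (1/δ) := by
      rw [hrdef, Real.log_rpow hδ0, one_div δ, Real.log_inv]
      ring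
    linarith
  -- termwise bounds
  have hterm1 : ∀ m ∈ (Finset.Icc 1 M).filter (· ≤ N), 1/((m:ℝ) * (1 + δ * (m:ℝ)^s)) ≤ 1/(m:ℝ) := by
    intro m hm
    simp only [Finset.mem_filter, Finset.mem_Icc] at hm
    have hm0 : (0:ℝ) < m := by exact_mod_cast hm.1.1
    have hp : (0:ℝ) < δ * (m:ℝ)^s := by positivity
    apply one_div_le_one_div_of_le hm0
    nlinarith
  have hterm2 : ∀ m ∈ (Finset.Icc 1 M).filter (fun m => ¬ m ≤ N),
      1/((m:ℝ) * (1 + δ * (m:ℝ)^s)) ≤ δ⁻¹ * (m:ℝ)^(-1-s) := by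
    intro m hm
    simp only [Finset.mem_filter, Finset.mem_Icc] at hm
    have hm0 : (0:ℝ) < m := by exact_mod_cast hm.1.1
    have hms : (0:ℝ) < (m:ℝ)^s := Real.rpow_pos_of_pos hm0 _
    have he : (m:ℝ)^(-1-s) = ((m:ℝ) * (m:ℝ)^s)⁻¹ := by
      rw [show (-1-s:ℝ) = -(1+s) by ring, Real.rpow_neg (le_of_lt hm0),
        Real.rpow_add hm0, Real.rpow_one]
    rw [he, ← mul_inv, one_div]
    apply inv_anti₀ (by positivity)
    nlinarith
  have hsplit := Finset.sum_filter_add_sum_filter_not (Finset.Icc 1 M) (· ≤ N)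
    (fun m => 1/((m:ℝ) * (1 + δ * (m:ℝ)^s)))
  have hpart1 : ∑ m ∈ (Finset.Icc 1 M).filter (· ≤ N), 1/((m:ℝ) * (1 + δ * (m:ℝ)^s))
      ≤ 1 + Real.log N := by
    calc ∑ m ∈ (Finset.Icc 1 M).filter (· ≤ N), 1/((m:ℝ) * (1 + δ * (m:ℝ)^s))
        ≤ ∑ m ∈ (Finset.Icc 1 M).filter (· ≤ N), 1/(m:ℝ) := Finset.sum_le_sum hterm1
      _ ≤ ∑ m ∈ Finset.Icc 1 N, 1/(m:ℝ) := by
          apply Finset.sum_le_sum_of_subset_of_nonneg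
          · intro m hm
            simp only [Finset.mem_filter, Finset.mem_Icc] at *
            omega
          · intro m _ _
            positivity
      _ ≤ 1 + Real.log N := harmonic_bound N
  have hpart2 : ∑ m ∈ (Finset.Icc 1 M).filter (fun m => ¬ m ≤ N),
      1/((m:ℝ) * (1 + δ * (m:ℝ)^s)) ≤ 1/s := by
    calc ∑ m ∈ (Finset.Icc 1 M).filter (fun m => ¬ m ≤ N), 1/((m:ℝ) * (1 + δ * (m:ℝ)^s))
        ≤ ∑ m ∈ (Finset.Icc 1 M).filter (fun m => ¬ m ≤ N), δ⁻¹ * (m:ℝ)^(-1-s) :=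
          Finset.sum_le_sum hterm2
      _ ≤ ∑ m ∈ Finset.Icc (N+1) M, δ⁻¹ * (m:ℝ)^(-1-s) := by
          apply Finset.sum_le_sum_of_subset_of_nonneg
          · intro m hm
            simp only [Finset.mem_filter, Finset.mem_Icc] at *
            omega
          · intro m _ _
            have : (0:ℝ) ≤ (m:ℝ) := by positivity
            positivity
      _ = δ⁻¹ * ∑ m ∈ Finset.Icc (N+1) M, (m:ℝ)^(-1-s) := by rw [Finset.mul_sum]
      _ ≤ δ⁻¹ * ((N:ℝ)^(-s)/s) := by
          apply mul_le_mul_of_nonneg_left (tailsum' hs hN1 M) (by positivity)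
      _ ≤ 1/s := by
          have h1 : δ⁻¹ * (N:ℝ)^(-s) ≤ 1 := by
            calc δ⁻¹ * (N:ℝ)^(-s) ≤ δ⁻¹ * δ := by
                  apply mul_le_mul_of_nonneg_left hNs (le_of_lt (inv_pos.mpr hδ0))
              _ = 1 := inv_mul_cancel₀ (ne_of_gt hδ0)
          calc δ⁻¹ * ((N:ℝ)^(-s)/s) = (δ⁻¹ * (N:ℝ)^(-s))/s := by ring
            _ ≤ 1/s := by gcongr
  calc ∑ m ∈ Finset.Icc 1 M, 1/((m:ℝ) * (1 + δ * (m:ℝ)^s))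
      = ∑ m ∈ (Finset.Icc 1 M).filter (· ≤ N), 1/((m:ℝ) * (1 + δ * (m:ℝ)^s))
        + ∑ m ∈ (Finset.Icc 1 M).filter (fun m => ¬ m ≤ N), 1/((m:ℝ) * (1 + δ * (m:ℝ)^s)) :=
        hsplit.symm
    _ ≤ (1 + Real.log N) + 1/s := add_le_add hpart1 hpart2
    _ ≤ 1 + Real.log 2 + (1/s) * Real.log (1/δ) + 1/s := by linarith

lemma denom_mono {β δ : ℝ} (hβ : 0 < β) (hδ0 : 0 < δ) {x y : ℝ} (hy : 0 < y) (hxy : y ≤ x) :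
    1/(x * (1 + δ * x^β)) ≤ 1/(y * (1 + δ * y^β)) := by
  have hx : 0 < x := lt_of_lt_of_le hy hxy
  have h1 : y^β ≤ x^β := Real.rpow_le_rpow hy.le hxy hβ.le
  have h2 : (0:ℝ) < y^β := Real.rpow_pos_of_pos hy β
  apply one_div_le_one_div_of_le (by positivity)
  have h3 : 1 + δ * y^β ≤ 1 + δ * x^β := by nlinarith
  exact mul_le_mul hxy h3 (by positivity) hx.le

noncomputable def boxZ (n : ℕ) : Finset (ℤ × ℤ) := Finset.Icc (-(n:ℤ)) n ×ˢ Finset.Icc (-(n:ℤ)) n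

lemma card_boxZ (n : ℕ) : (boxZ n).card = (2*n+1) * (2*n+1) := by
  rw [boxZ, Finset.card_product, Int.card_Icc]
  have : ((n:ℤ) + 1 - -(n:ℤ)).toNat = 2*n+1 := by omega
  rw [this]

lemma boxZ_mono {a b : ℕ} (h : a ≤ b) : boxZ a ⊆ boxZ b := by
  apply Finset.product_subset_product <;>
    · apply Finset.Icc_subset_Icc <;> omega

lemma card_shell {j : ℕ} (hj : 1 ≤ j) : (boxZ j \ boxZ (j-1)).card ≤ 8 * j := by
  rw [Finset.card_sdiff_of_subset (boxZ_mono (by omega)), card_boxZ, card_boxZ]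
  obtain ⟨i, rfl⟩ : ∃ i, j = i + 1 := ⟨j - 1, by omega⟩
  simp only [Nat.add_sub_cancel]
  have h1 : (2*(i+1)+1) * (2*(i+1)+1) = (2*i+1)*(2*i+1) + 8*(i+1) := by ring
  omega

lemma finsum_bound {β δ : ℝ} (hβ : 0 < β) (hδ0 : 0 < δ) (hδ1 : δ < 1)
    (F : Finset {k : ℤ × ℤ // k ≠ 0}) :
    ∑ k ∈ F, 1 / ((((k : ℤ × ℤ).1 : ℝ) ^ 2 + ((k : ℤ × ℤ).2 : ℝ) ^ 2) *
        (1 + δ * ((((k : ℤ × ℤ).1 : ℝ) ^ 2 + ((k : ℤ × ℤ).2 : ℝ) ^ 2) ^ β)))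
      ≤ 8 * (1 + Real.log 2 + (1/(2*β)) * Real.log (1/δ) + 1/(2*β)) := by
  classical
  set f : {k : ℤ × ℤ // k ≠ 0} → ℝ := fun k =>
    1 / ((((k : ℤ × ℤ).1 : ℝ) ^ 2 + ((k : ℤ × ℤ).2 : ℝ) ^ 2) *
      (1 + δ * ((((k : ℤ × ℤ).1 : ℝ) ^ 2 + ((k : ℤ × ℤ).2 : ℝ) ^ 2) ^ β))) with hfdef
  set mf : {k : ℤ × ℤ // k ≠ 0} → ℕ := fun k => max (k : ℤ × ℤ).1.natAbs (k : ℤ × ℤ).2.natAbs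
    with hmfdef
  have hmf1 : ∀ k : {k : ℤ × ℤ // k ≠ 0}, 1 ≤ mf k := by
    rintro ⟨⟨a, b⟩, hk⟩
    simp only [hmfdef]
    have : a ≠ 0 ∨ b ≠ 0 := by
      by_contra h
      push_neg at h
      exact hk (by simp [Prod.ext_iff, h.1, h.2])
    omega
  set M : ℕ := F.sup mf with hMdef
  have hmaps : ∀ k ∈ F, mf k ∈ Finset.Icc 1 M := by
    intro k hk
    simp only [Finset.mem_Icc]
    exact ⟨hmf1 k, Finset.le_sup hk⟩
  rw [← Finset.sum_fiberwise_of_maps_to hmaps f]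
  have key : ∀ j ∈ Finset.Icc 1 M,
      ∑ k ∈ F.filter (fun k => mf k = j), f k
        ≤ 8 * (1/((j:ℝ) * (1 + δ * (j:ℝ)^(2*β)))) := by
    intro j hj
    simp only [Finset.mem_Icc] at hj
    have hj1 : 1 ≤ j := hj.1
    have hj0 : (0:ℝ) < (j:ℝ) := by exact_mod_cast hj1
    set φ : ℝ := 1 / (((j:ℝ)^2) * (1 + δ * (((j:ℝ)^2) ^ β))) with hφdef
    have hφ0 : 0 ≤ φ := by positivity
    -- termwise bound
    have hterm : ∀ k ∈ F.filter (fun k => mf k = j), f k ≤ φ := by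
      rintro ⟨⟨a, b⟩, hne⟩ hk
      simp only [Finset.mem_filter, hmfdef] at hk
      obtain ⟨-, hkj⟩ := hk
      have hsq : (j:ℝ)^2 ≤ ((a:ℝ))^2 + ((b:ℝ))^2 := by
        have hz : (j:ℤ)^2 ≤ a^2 + b^2 := by
          rcases max_choice a.natAbs b.natAbs with hm | hm
          · rw [hm] at hkj
            have hja : (j:ℤ) = (a.natAbs:ℤ) := by exact_mod_cast hkj.symm
            rw [hja, Int.natAbs_sq]
            nlinarith [sq_nonneg b]
          · rw [hm] at hkj
            have hjb : (j:ℤ) = (b.natAbs:ℤ) := by exact_mod_cast hkj.symm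
            rw [hjb, Int.natAbs_sq]
            nlinarith [sq_nonneg a]
        exact_mod_cast hz
      exact denom_mono hβ hδ0 (by positivity) hsq
    have hcard : (F.filter (fun k => mf k = j)).card ≤ 8 * j := by
      refine le_trans ?_ (card_shell hj1)
      apply Finset.card_le_card_of_injOn
        (Subtype.val : {k : ℤ × ℤ // k ≠ 0} → ℤ × ℤ)
      · intro k hk
        simp only [Finset.mem_coe, Finset.coe_filter, Set.mem_setOf_eq, Finset.mem_filter] at hk ⊢
        obtain ⟨-, hkj⟩ := hk
        simp only [Finset.mem_sdiff, boxZ, Finset.mem_product, Finset.mem_Icc]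
        have h1 : max (k : ℤ × ℤ).1.natAbs (k : ℤ × ℤ).2.natAbs = j := hkj
        omega
      · intro a _ b _ h
        exact Subtype.ext h
    calc ∑ k ∈ F.filter (fun k => mf k = j), f k
        ≤ ∑ _k ∈ F.filter (fun k => mf k = j), φ := Finset.sum_le_sum hterm
      _ = (F.filter (fun k => mf k = j)).card * φ := by rw [Finset.sum_const, nsmul_eq_mul]
      _ ≤ (8 * j : ℕ) * φ := by
          apply mul_le_mul_of_nonneg_right _ hφ0
          exact_mod_cast hcard
      _ = 8 * (1/((j:ℝ) * (1 + δ * (j:ℝ)^(2*β)))) := by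
          rw [hφdef]
          have hrw : ((j:ℝ)^2) ^ β = (j:ℝ)^(2*β) := by
            rw [← Real.rpow_natCast (j:ℝ) 2, ← Real.rpow_mul hj0.le]
            norm_num
          rw [hrw]
          have hd : (0:ℝ) < 1 + δ * (j:ℝ)^(2*β) := by
            have := Real.rpow_pos_of_pos hj0 (2*β)
            positivity
          push_cast
          field_simp
  calc ∑ j ∈ Finset.Icc 1 M, ∑ k ∈ F.filter (fun k => mf k = j), f k
      ≤ ∑ j ∈ Finset.Icc 1 M, 8 * (1/((j:ℝ) * (1 + δ * (j:ℝ)^(2*β)))) := Finset.sum_le_sum key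
    _ = 8 * ∑ j ∈ Finset.Icc 1 M, 1/((j:ℝ) * (1 + δ * (j:ℝ)^(2*β))) := by rw [Finset.mul_sum]
    _ ≤ 8 * (1 + Real.log 2 + (1/(2*β)) * Real.log (1/δ) + 1/(2*β)) := by
        apply mul_le_mul_of_nonneg_left (oneD hβ hδ0 hδ1 M) (by norm_num)

theorem stmt_0 :
    ∃ C : ℝ, 0 < C ∧ ∀ β δ : ℝ, 0 < β → δ ∈ Set.Ioo (0:ℝ) 1 →
      (∑' k : {k : ℤ × ℤ // k ≠ 0},
          1 / ((((k : ℤ × ℤ).1 : ℝ) ^ 2 + ((k : ℤ × ℤ).2 : ℝ) ^ 2) *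
            (1 + δ * ((((k : ℤ × ℤ).1 : ℝ) ^ 2 + ((k : ℤ × ℤ).2 : ℝ) ^ 2) ^ β)))) ≤
        C * ((1 / β) * Real.log (1 / δ) + 1 / β + 1) := by
  refine ⟨16, by norm_num, ?_⟩
  intro β δ hβ hδ
  obtain ⟨hδ0, hδ1⟩ := hδ
  have hld : 0 ≤ Real.log (1/δ) := by
    apply Real.log_nonneg
    rw [le_div_iff₀ hδ0]
    linarith
  have hb : (0:ℝ) < 1/β := by positivity
  have hRHS : 8 * (1 + Real.log 2 + (1/(2*β)) * Real.log (1/δ) + 1/(2*β))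
      ≤ 16 * ((1 / β) * Real.log (1 / δ) + 1 / β + 1) := by
    have hl2 : Real.log 2 ≤ 1 := by
      have := Real.log_le_sub_one_of_pos (by norm_num : (0:ℝ) < 2)
      linarith
    have h2b : 1/(2*β) ≤ 1/β := by
      apply one_div_le_one_div_of_le hβ
      linarith
    have h2b0 : (0:ℝ) < 1/(2*β) := by positivity
    nlinarith [mul_le_mul_of_nonneg_right h2b hld]
  by_cases hsum : Summable (fun k : {k : ℤ × ℤ // k ≠ 0} =>
      1 / ((((k : ℤ × ℤ).1 : ℝ) ^ 2 + ((k : ℤ × ℤ).2 : ℝ) ^ 2) *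
        (1 + δ * ((((k : ℤ × ℤ).1 : ℝ) ^ 2 + ((k : ℤ × ℤ).2 : ℝ) ^ 2) ^ β))))
  · apply Summable.tsum_le_of_sum_le hsum
    intro F
    exact le_trans (finsum_bound hβ hδ0 hδ1 F) hRHS
  · rw [tsum_eq_zero_of_not_summable hsum]
    nlinarith
end

section
/- Let $E$, $F$ be Banach spaces, $D$ a nonempty set, and suppose a family of probability measures $(\nu_\epsilon)_{\epsilon>0}$ on $F$ satisfies a large deviations lower bound with good rate function $J$. Let $(G^x)_{x \in D}$ be maps $F \to E$ that are Lipschitz with a common constant $L$: $\|G^x(f) - G^x(g)\|_E \leq L \|f - g\|_F$ for all $x \in D$. Define $I^x(\varphi) = \inf\{J(\psi) : \psi \in F, \varphi = G^x(\psi)\}$ and $\mu_\epsilon^x = \nu_\epsilon \circ (G^x)^{-1}$. Then for every $s \geq 0$, $\delta > 0$, $\gamma > 0$, there exists $\epsilon_0 > 0$ such that for all $\epsilon \leq \epsilon_0$, all $x \in D$, and all $\varphi \in E$ with $I^x(\varphi) \leq s$: $\mu_\epsilon^x(B_E(\varphi, \delta)) \geq \exp(-(I^x(\varphi) + \gamma)/\epsilon)$.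 -/
open MeasureTheory
open scoped ENNReal

theorem stmt_8 {E F D : Type*} [NormedAddCommGroup E] [NormedSpace ℝ E]
    [NormedAddCommGroup F] [NormedSpace ℝ F] [MeasurableSpace F] [Nonempty D]
    (ν : ℝ → Measure F) (hprob : ∀ ε > (0:ℝ), IsProbabilityMeasure (ν ε))
    (J : F → ℝ≥0∞)
    (hgood : ∀ s : ℝ, IsCompact {ψ : F | J ψ ≤ ENNReal.ofReal s})
    (hlow : ∀ s ≥ (0:ℝ), ∀ δ' > (0:ℝ), ∀ γ' > (0:ℝ), ∃ ε0 > (0:ℝ),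
      ∀ ε : ℝ, 0 < ε → ε ≤ ε0 → ∀ ψ : F, J ψ ≤ ENNReal.ofReal s →
        ENNReal.ofReal (Real.exp (-((J ψ).toReal + γ') / ε)) ≤ ν ε (Metric.ball ψ δ'))
    (G : D → F → E) (L : ℝ) (hL : 0 < L)
    (hlip : ∀ x : D, ∀ f g : F, dist (G x f) (G x g) ≤ L * dist f g)
    (I : D → E → ℝ≥0∞) (hI : ∀ x φ, I x φ = sInf (J '' {ψ : F | G x ψ = φ})) :
    ∀ s ≥ (0:ℝ), ∀ δ > (0:ℝ), ∀ γ > (0:ℝ), ∃ ε0 > (0:ℝ),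
      ∀ ε : ℝ, 0 < ε → ε ≤ ε0 → ∀ x : D, ∀ φ : E, I x φ ≤ ENNReal.ofReal s →
        ENNReal.ofReal (Real.exp (-((I x φ).toReal + γ) / ε)) ≤
          ν ε (G x ⁻¹' Metric.ball φ δ) := by
  intro s hs δ hδ γ hγ
  obtain ⟨ε0, hε0, hmain⟩ := hlow (s + γ/2) (by linarith) (δ/L) (by positivity) (γ/2) (by linarith)
  refine ⟨ε0, hε0, fun ε hε hεle x φ hIφ => ?_⟩
  have hIne : I x φ ≠ ⊤ := ne_top_of_le_ne_top ENNReal.ofReal_ne_top hIφ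
  have hγ2 : (ENNReal.ofReal (γ/2)) ≠ 0 := by
    simp [ENNReal.ofReal_eq_zero]; linarith
  have hlt : I x φ < I x φ + ENNReal.ofReal (γ/2) :=
    ENNReal.lt_add_right hIne hγ2
  rw [hI x φ] at hlt
  obtain ⟨a, ⟨ψ, hψmem, rfl⟩, ha⟩ := sInf_lt_iff.mp hlt
  have hGψ : G x ψ = φ := hψmem
  have hJle : J ψ ≤ I x φ + ENNReal.ofReal (γ/2) := by rw [hI x φ]; exact ha.le
  have hJs : J ψ ≤ ENNReal.ofReal (s + γ/2) := by
    calc J ψ ≤ I x φ + ENNReal.ofReal (γ/2) := hJle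
    _ ≤ ENNReal.ofReal s + ENNReal.ofReal (γ/2) := add_le_add hIφ le_rfl
    _ = ENNReal.ofReal (s + γ/2) := (ENNReal.ofReal_add hs (by linarith)).symm
  have hJne : J ψ ≠ ⊤ := ne_top_of_le_ne_top ENNReal.ofReal_ne_top hJs
  have hball : Metric.ball ψ (δ/L) ⊆ G x ⁻¹' Metric.ball φ δ := by
    intro f hf
    simp only [Metric.mem_ball, Set.mem_preimage] at hf ⊢
    calc dist (G x f) φ = dist (G x f) (G x ψ) := by rw [hGψ]
    _ ≤ L * dist f ψ := hlip x f ψ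
    _ < L * (δ/L) := by exact mul_lt_mul_of_pos_left hf hL
    _ = δ := by field_simp
  have hJreal : (J ψ).toReal ≤ (I x φ).toReal + γ/2 := by
    have := ENNReal.toReal_mono (by
      rw [ENNReal.add_ne_top]; exact ⟨hIne, ENNReal.ofReal_ne_top⟩) hJle
    rwa [ENNReal.toReal_add hIne ENNReal.ofReal_ne_top,
      ENNReal.toReal_ofReal (by linarith)] at this
  calc ENNReal.ofReal (Real.exp (-((I x φ).toReal + γ) / ε))
      ≤ ENNReal.ofReal (Real.exp (-((J ψ).toReal + γ/2) / ε)) := by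
        apply ENNReal.ofReal_le_ofReal
        apply Real.exp_le_exp.mpr
        exact div_le_div_of_nonneg_right (by linarith) hε.le |>.trans_eq rfl
    _ ≤ ν ε (Metric.ball ψ (δ/L)) := hmain ε hε hεle ψ hJs
    _ ≤ ν ε (G x ⁻¹' Metric.ball φ δ) := measure_mono hball
end

section
/- Let $E$, $F$ be Banach spaces, $D$ a nonempty set, and suppose probability measures $(\nu_\epsilon)_{\epsilon>0}$ on $F$ satisfy the large deviations upper bound with good rate function $J$. Let $(G^x)_{x \in D}$ be maps $F \to E$ uniformly Lipschitz with constant $L$, set $I^x(\varphi) = \inf\{J(\psi) : G^x(\psi) = \varphi\}$, $\Phi^x(s) = \{\varphi : I^x(\varphi) \leq s\}$, and $\mu_\epsilon^x = \nu_\epsilon \circ (G^x)^{-1}$. Then for every $s_0 \geq 0$, $\delta > 0$, $\gamma > 0$, there exists $\epsilon_0 > 0$ such that for all $\epsilon \leq \epsilon_0$, $s \leq s_0$, and $x \in D$: $\mu_\epsilon^x(\{h \in E : \mathrm{dist}_E(h, \Phi^x(s)) \geq \delta\}) \leq \exp(-(s - \gamma)/\epsilon)$. -/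
open MeasureTheory Set
open scoped ENNReal


lemma attain_aux {E F : Type*} [NormedAddCommGroup E] [NormedAddCommGroup F]
    (J : F → ℝ≥0∞)
    (hgood : ∀ s : ℝ, IsCompact {ψ : F | J ψ ≤ ENNReal.ofReal s})
    (g : F → E) (hg : Continuous g) (φ : E) (s : ℝ) (hs : 0 ≤ s)
    (h : sInf (J '' {ψ : F | g ψ = φ}) ≤ ENNReal.ofReal s) :
    ∃ ψ : F, g ψ = φ ∧ J ψ ≤ ENNReal.ofReal s := by
  set C : ℕ → Set F := fun n => {ψ : F | g ψ = φ} ∩ {ψ : F | J ψ ≤ ENNReal.ofReal (s + 1/(n+1))}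
    with hC
  have hclosed : ∀ n, IsClosed (C n) :=
    fun n => ((isClosed_singleton.preimage hg).inter (hgood _).isClosed)
  have hcompact : ∀ n, IsCompact (C n) :=
    fun n => (hgood _).of_isClosed_subset (hclosed n) (inter_subset_right)
  have hnonempty : ∀ n, (C n).Nonempty := by
    intro n
    have hlt : sInf (J '' {ψ : F | g ψ = φ}) < ENNReal.ofReal (s + 1/(n+1)) := by
      refine lt_of_le_of_lt h ?_
      exact (ENNReal.ofReal_lt_ofReal_iff_of_nonneg hs).mpr (lt_add_of_pos_right s (by positivity))
    obtain ⟨a, ha, halt⟩ := sInf_lt_iff.mp hlt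
    obtain ⟨ψ, hψ, rfl⟩ := ha
    exact ⟨ψ, hψ, halt.le⟩
  have hanti : Antitone C := by
    intro m n hmn
    refine inter_subset_inter_right _ ?_
    intro ψ hψ
    refine le_trans hψ (ENNReal.ofReal_le_ofReal ?_)
    have : (1:ℝ)/(n+1) ≤ 1/(m+1) := by
      apply one_div_le_one_div_of_le (by positivity)
      exact_mod_cast by omega
    linarith
  obtain ⟨ψ, hψ⟩ := IsCompact.nonempty_iInter_of_directed_nonempty_isCompact_isClosed C
    (hanti.directed_ge) hnonempty hcompact hclosed
  simp only [mem_iInter, hC, mem_inter_iff, mem_setOf_eq] at hψ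
  refine ⟨ψ, (hψ 0).1, ?_⟩
  have htend : Filter.Tendsto (fun n : ℕ => ENNReal.ofReal (s + 1/(n+1)))
      Filter.atTop (nhds (ENNReal.ofReal s)) := by
    have : Filter.Tendsto (fun n : ℕ => s + 1/((n:ℝ)+1)) Filter.atTop (nhds s) := by
      have := tendsto_one_div_add_atTop_nhds_zero_nat (𝕜 := ℝ)
      simpa using Filter.Tendsto.const_add s this
    exact (ENNReal.continuous_ofReal.tendsto s).comp this
  exact ge_of_tendsto' htend (fun n => (hψ n).2)

theorem stmt_9 {E F D : Type*} [NormedAddCommGroup E] [NormedSpace ℝ E]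
    [NormedAddCommGroup F] [NormedSpace ℝ F] [MeasurableSpace F] [Nonempty D]
    (ν : ℝ → Measure F) (hprob : ∀ ε > (0:ℝ), IsProbabilityMeasure (ν ε))
    (J : F → ℝ≥0∞)
    (hgood : ∀ s : ℝ, IsCompact {ψ : F | J ψ ≤ ENNReal.ofReal s})
    (hup : ∀ s0 ≥ (0:ℝ), ∀ δ' > (0:ℝ), ∀ γ' > (0:ℝ), ∃ ε0 > (0:ℝ),
      ∀ ε : ℝ, 0 < ε → ε ≤ ε0 → ∀ s : ℝ, 0 ≤ s → s ≤ s0 →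
        ν ε {f : F | δ' ≤ Metric.infDist f {ψ : F | J ψ ≤ ENNReal.ofReal s}} ≤
          ENNReal.ofReal (Real.exp (-(s - γ') / ε)))
    (G : D → F → E) (L : ℝ) (hL : 0 < L)
    (hlip : ∀ x : D, ∀ f g : F, dist (G x f) (G x g) ≤ L * dist f g)
    (I : D → E → ℝ≥0∞) (hI : ∀ x φ, I x φ = sInf (J '' {ψ : F | G x ψ = φ})) :
    ∀ s0 ≥ (0:ℝ), ∀ δ > (0:ℝ), ∀ γ > (0:ℝ), ∃ ε0 > (0:ℝ),
      ∀ ε : ℝ, 0 < ε → ε ≤ ε0 → ∀ s : ℝ, 0 ≤ s → s ≤ s0 → ∀ x : D,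
        ν ε (G x ⁻¹' {h : E | δ ≤ Metric.infDist h {φ : E | I x φ ≤ ENNReal.ofReal s}}) ≤
          ENNReal.ofReal (Real.exp (-(s - γ) / ε)) := by
  intro s0 hs0 δ hδ γ hγ
  obtain ⟨ε0, hε0, hbound⟩ := hup s0 hs0 (δ / L) (div_pos hδ hL) γ hγ
  refine ⟨ε0, hε0, fun ε hε hεε0 s hs hss0 x => ?_⟩
  have hgc : Continuous (G x) := by
    have : LipschitzWith ⟨L, hL.le⟩ (G x) :=
      LipschitzWith.of_dist_le_mul (fun f g => by exact hlip x f g)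
    exact this.continuous
  refine le_trans (measure_mono ?_) (hbound ε hε hεε0 s hs hss0)
  intro f hf
  simp only [Set.mem_preimage, Set.mem_setOf_eq] at hf ⊢
  -- Φ is nonempty, else infDist = 0 < δ
  have hΦne : {φ : E | I x φ ≤ ENNReal.ofReal s}.Nonempty := by
    by_contra hempty
    rw [Set.not_nonempty_iff_eq_empty] at hempty
    rw [hempty, Metric.infDist_empty] at hf
    linarith
  -- hence K nonempty
  obtain ⟨φ0, hφ0⟩ := hΦne
  have hKne : {ψ : F | J ψ ≤ ENNReal.ofReal s}.Nonempty := by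
    simp only [Set.mem_setOf_eq, hI x] at hφ0
    obtain ⟨ψ0, _, hψ0⟩ := attain_aux J hgood (G x) hgc φ0 s hs hφ0
    exact ⟨ψ0, hψ0⟩
  by_contra hcon
  push_neg at hcon
  obtain ⟨ψ, hψK, hdist⟩ := (Metric.infDist_lt_iff hKne).mp hcon
  have hmem : G x ψ ∈ {φ : E | I x φ ≤ ENNReal.ofReal s} := by
    rw [Set.mem_setOf_eq, hI]
    exact le_trans (sInf_le ⟨ψ, rfl, rfl⟩) hψK
  have h1 : Metric.infDist (G x f) {φ : E | I x φ ≤ ENNReal.ofReal s} ≤ dist (G x f) (G x ψ) :=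
    Metric.infDist_le_dist_of_mem hmem
  have h2 : dist (G x f) (G x ψ) ≤ L * dist f ψ := hlip x f ψ
  have h3 : L * dist f ψ < L * (δ / L) := by
    exact mul_lt_mul_of_pos_left hdist hL
  rw [mul_div_cancel₀ _ hL.ne'] at h3
  linarith
end
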